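/- arXiv:2412.03862 — 6 statements merged into one kernel-verified Lean document; each statement's English description precedes it below -/
import Mathlib

section
/- Let F be a union-closed family of subsets of [n] with at least one member not contained in [k-1]. Let a ∉ [k-1] be an element contained in at least half of the sets of the projected family π(F) = {A \ [k-1] : A ∈ F}. Then a is contained in at least |F|/(2^{k-1}+1) sets of F. -/
/-- If `a ∉ [k-1]` lies in at least half of the sets of the projection
`π(F) = {A \ [k-1] : A ∈ F}` of a union-closed family `F`, then `a` lies in at
least `|F|/(2^(k-1)+1)` sets of `F`. -/
theorem stmt_3 (n k : ℕ) (hk : 1 ≤ k) (F : Finset (Finset ℕ)) (a : ℕ)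
    (hsub : ∀ A ∈ F, A ⊆ Finset.Icc 1 n)
    (hUC : ∀ A ∈ F, ∀ B ∈ F, A ∪ B ∈ F)
    (hbig : ∃ A ∈ F, ¬ A ⊆ Finset.Icc 1 (k - 1))
    (ha : a ∉ Finset.Icc 1 (k - 1))
    (hhalf : ((F.image (fun A => A \ Finset.Icc 1 (k - 1))).card : ℚ) ≤
      2 * (((F.image (fun A => A \ Finset.Icc 1 (k - 1))).filter
        (fun B => a ∈ B)).card : ℚ)) :
    (F.card : ℚ) / (2 ^ (k - 1) + 1) ≤ ((F.filter (fun A => a ∈ A)).card : ℚ) := by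
  set I := Finset.Icc 1 (k - 1) with hI
  set π : Finset ℕ → Finset ℕ := fun A => A \ I with hπ
  set G := F.image π with hG
  set Fa := F.filter (fun A => a ∈ A) with hFa
  set Ga := G.filter (fun B => a ∈ B) with hGa
  have hcardF : Fa.card + (F.filter (fun A => ¬ a ∈ A)).card = F.card :=
    Finset.card_filter_add_card_filter_not _
  have hcardG : Ga.card + (G.filter (fun B => ¬ a ∈ B)).card = G.card :=
    Finset.card_filter_add_card_filter_not _
  set Fna := F.filter (fun A => ¬ a ∈ A)
  set Gna := G.filter (fun B => ¬ a ∈ B)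
  -- Ga injects (via choosing preimages) into Fa
  have h1 : Ga.card ≤ Fa.card := by
    have hsubs : Ga ⊆ Fa.image π := by
      intro B hB
      rw [hGa, Finset.mem_filter, hG, Finset.mem_image] at hB
      obtain ⟨⟨A, hA, rfl⟩, haB⟩ := hB
      refine Finset.mem_image.2 ⟨A, Finset.mem_filter.2 ⟨hA, ?_⟩, rfl⟩
      exact (Finset.mem_sdiff.1 haB).1
    calc Ga.card ≤ (Fa.image π).card := Finset.card_le_card hsubs
      _ ≤ Fa.card := Finset.card_image_le
  -- fiber bound: Fna injects into Gna ×ˢ powerset I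
  have h2 : Fna.card ≤ Gna.card * 2 ^ (k - 1) := by
    have hinj : ∀ A ∈ Fna, ∀ A' ∈ Fna,
        (fun A => (π A, A ∩ I)) A = (fun A => (π A, A ∩ I)) A' → A = A' := by
      intro A hA A' hA' h
      simp only [Prod.mk.injEq] at h
      have : π A ∪ A ∩ I = π A' ∪ A' ∩ I := by rw [h.1, h.2]
      simpa [hπ, Finset.sdiff_union_inter] using this
    have hmaps : ∀ A ∈ Fna, (fun A => (π A, A ∩ I)) A ∈ Gna ×ˢ I.powerset := by
      intro A hA
      rw [Finset.mem_filter] at hA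
      refine Finset.mem_product.2 ⟨Finset.mem_filter.2 ⟨Finset.mem_image_of_mem _ hA.1, ?_⟩,
        Finset.mem_powerset.2 (Finset.inter_subset_right)⟩
      simp only [hπ, Finset.mem_sdiff]
      tauto
    have := Finset.card_le_card_of_injOn _ hmaps hinj
    have hIcard : I.card = k - 1 := by simp [hI]
    simpa [Finset.card_product, Finset.card_powerset, hIcard] using this
  -- from hhalf: Gna.card ≤ Ga.card
  have h3 : Gna.card ≤ Ga.card := by
    have : (G.card : ℚ) ≤ 2 * Ga.card := hhalf
    have hg : (Ga.card : ℚ) + Gna.card = G.card := by exact_mod_cast hcardG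
    have : (Gna.card : ℚ) ≤ Ga.card := by linarith
    exact_mod_cast this
  -- combine
  have hmain : F.card ≤ Fa.card * (2 ^ (k - 1) + 1) := by
    calc F.card = Fa.card + Fna.card := hcardF.symm
      _ ≤ Fa.card + Gna.card * 2 ^ (k - 1) := by omega
      _ ≤ Fa.card + Fa.card * 2 ^ (k - 1) := by
          have : Gna.card ≤ Fa.card := le_trans h3 h1
          gcongr
      _ = Fa.card * (2 ^ (k - 1) + 1) := by ring
  have hpos : (0 : ℚ) < 2 ^ (k - 1) + 1 := by positivity
  rw [div_le_iff₀ hpos]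
  have : (F.card : ℚ) ≤ Fa.card * (2 ^ (k - 1) + 1) := by exact_mod_cast hmain
  linarith
end

section
/- Let k ≥ 2 and let F be a union-closed family of subsets of [n] with |F| ≤ 2^k + 1 and |⋃_{A∈F} A| ≥ k, and suppose the elements 1,…,k-1 are the k-1 most frequent elements of F. Then some element i ∉ [k-1] is contained in at least |F|/(2^{k-1}+1) sets of F. -/
/-- Let `k ≥ 2` and let `F` be a union-closed family of subsets of `[n]` with
`|F| ≤ 2^k + 1` and support of size at least `k`, whose `k-1` most frequent
elements are `1, …, k-1`. Then some element `i ∉ [k-1]` is contained in at least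
`|F|/(2^(k-1)+1)` sets of `F`. -/
theorem stmt_6 (n k : ℕ) (hk : 2 ≤ k) (F : Finset (Finset ℕ))
    (hsub : ∀ A ∈ F, A ⊆ Finset.Icc 1 n)
    (hUC : ∀ A ∈ F, ∀ B ∈ F, A ∪ B ∈ F)
    (hcard : F.card ≤ 2 ^ k + 1)
    (hsupp : k ≤ (F.sup id).card)
    (hfreq : ∀ i ∈ Finset.Icc 1 (k - 1), ∀ j, j ∉ Finset.Icc 1 (k - 1) →
      (F.filter (fun A => j ∈ A)).card ≤ (F.filter (fun A => i ∈ A)).card) :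
    ∃ i, i ∉ Finset.Icc 1 (k - 1) ∧
      (F.card : ℚ) / (2 ^ (k - 1) + 1) ≤ ((F.filter (fun A => i ∈ A)).card : ℚ) := by
  have hne : F.Nonempty := by
    rcases F.eq_empty_or_nonempty with h | h
    · exfalso; rw [h] at hsupp; simp at hsupp; omega
    · exact h
  have hU : F.sup id ∈ F := by
    have h := Finset.sup'_mem (↑F : Set (Finset ℕ))
      (fun a ha b hb => hUC a ha b hb) F hne id (fun b hb => hb)
    rwa [Finset.sup'_eq_sup] at h
  have hdpos : (0:ℚ) < 2 ^ (k - 1) + 1 := by positivity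
  obtain ⟨j, hjU, hjI⟩ : ∃ j ∈ F.sup id, j ∉ Finset.Icc 1 (k - 1) := by
    by_contra h; push_neg at h
    have h2 := Finset.card_le_card (h : F.sup id ⊆ Finset.Icc 1 (k - 1))
    rw [Nat.card_Icc] at h2; omega
  by_cases hsmall : F.card ≤ 2 ^ (k - 1) + 1
  · refine ⟨j, hjI, ?_⟩
    have h1 : 1 ≤ (F.filter (fun A => j ∈ A)).card :=
      Finset.card_pos.mpr ⟨F.sup id, Finset.mem_filter.mpr ⟨hU, hjU⟩⟩
    have hle1 : (F.card : ℚ) / (2 ^ (k - 1) + 1) ≤ 1 := by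
      rw [div_le_one hdpos]
      push_cast; exact_mod_cast hsmall
    calc (F.card : ℚ) / (2 ^ (k - 1) + 1) ≤ 1 := hle1
      _ ≤ _ := by exact_mod_cast h1
  · by_cases hex : ∃ i, i ∉ Finset.Icc 1 (k - 1) ∧ 2 ≤ (F.filter (fun A => i ∈ A)).card
    · obtain ⟨i, hi, h2⟩ := hex
      refine ⟨i, hi, ?_⟩
      have hpow : 2 ^ k = 2 * 2 ^ (k - 1) := by
        conv_lhs => rw [show k = k - 1 + 1 by omega]
        rw [pow_succ]; ring
      have hle2 : (F.card : ℚ) / (2 ^ (k - 1) + 1) ≤ 2 := by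
        rw [div_le_iff₀ hdpos]
        have : (F.card : ℚ) ≤ 2 ^ k + 1 := by exact_mod_cast hcard
        have hp : (2:ℚ) ^ k = 2 * 2 ^ (k - 1) := by exact_mod_cast hpow
        nlinarith
      calc (F.card : ℚ) / (2 ^ (k - 1) + 1) ≤ 2 := hle2
        _ ≤ _ := by exact_mod_cast h2
    · exfalso
      push_neg at hex
      have hsubA : ∀ A ∈ F, A ≠ F.sup id → A ⊆ Finset.Icc 1 (k - 1) := by
        intro A hA hAne x hx
        by_contra hxI
        have hxU : x ∈ F.sup id := Finset.le_sup (f := id) hA hx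
        have h2 : 1 < (F.filter (fun B => x ∈ B)).card :=
          Finset.one_lt_card.mpr ⟨A, Finset.mem_filter.mpr ⟨hA, hx⟩,
            F.sup id, Finset.mem_filter.mpr ⟨hU, hxU⟩, hAne⟩
        have := hex x hxI; omega
      have hFsub : F ⊆ insert (F.sup id) ((Finset.Icc 1 (k - 1)).powerset) := by
        intro A hA
        by_cases h : A = F.sup id
        · simp [h]
        · exact Finset.mem_insert_of_mem (Finset.mem_powerset.mpr (hsubA A hA h))
      have h1 := Finset.card_le_card hFsub
      have h2 := Finset.card_insert_le (F.sup id) ((Finset.Icc 1 (k - 1)).powerset)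
      rw [Finset.card_powerset, Nat.card_Icc] at h2
      have : k - 1 + 1 - 1 = k - 1 := by omega
      rw [this] at h2
      omega
end

section
/- Let F be a union-closed family with |F| = 2^{k-1} + 1 and |⋃_{A∈F} A| ≥ k, such that exactly one set S of F is not contained in [k-1], and the kth-most frequent element appears in exactly one set of F. Then F = 2^{[k-1]} ∪ {S} with [k-1] ⊊ S; i.e., F is a near-k-cube. -/
/-- If a union-closed family `F` has `|F| = 2^(k-1) + 1`, support of size at least `k`,
exactly one member `S` not contained in `[k-1]`, and the `k`th-most frequent element
appears in exactly one set (elements being ordered by frequency), then `F` is the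
near-`k`-cube `2^[k-1] ∪ {S}` with `[k-1] ⊊ S`. -/
theorem stmt_7 (n k : ℕ) (hk : 2 ≤ k) (hkn : k ≤ n) (F : Finset (Finset ℕ)) (S : Finset ℕ)
    (hsub : ∀ A ∈ F, A ⊆ Finset.Icc 1 n)
    (hUC : ∀ A ∈ F, ∀ B ∈ F, A ∪ B ∈ F)
    (hcard : F.card = 2 ^ (k - 1) + 1)
    (hsupp : k ≤ (F.sup id).card)
    (honly : F.filter (fun A => ¬ A ⊆ Finset.Icc 1 (k - 1)) = {S})
    (hmono : ∀ i j : ℕ, 1 ≤ i → i ≤ j → j ≤ n →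
      (F.filter (fun A => j ∈ A)).card ≤ (F.filter (fun A => i ∈ A)).card)
    (hkfreq : (F.filter (fun A => k ∈ A)).card = 1) :
    F = (Finset.Icc 1 (k - 1)).powerset ∪ {S} ∧ Finset.Icc 1 (k - 1) ⊂ S := by
  classical
  set I := Finset.Icc 1 (k - 1) with hI
  have hS : S ∈ F ∧ ¬ S ⊆ I := by
    have : S ∈ F.filter (fun A => ¬ A ⊆ I) := by rw [honly]; exact Finset.mem_singleton_self S
    simpa using this
  -- cardinality of the "inside" part
  have hsplit : (F.filter (fun A => A ⊆ I)).card
      + (F.filter (fun A => ¬ A ⊆ I)).card = F.card :=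
    Finset.card_filter_add_card_filter_not (p := fun A => A ⊆ I)
  have hin : (F.filter (fun A => A ⊆ I)).card = 2 ^ (k - 1) := by
    rw [honly] at hsplit
    simp only [Finset.card_singleton, hcard] at hsplit
    omega
  have hIcard : I.card = k - 1 := by
    rw [hI, Nat.card_Icc]; omega
  have hpow : (F.filter (fun A => A ⊆ I)) = I.powerset := by
    apply Finset.eq_of_subset_of_card_le
    · intro A hA
      simp only [Finset.mem_filter] at hA
      exact Finset.mem_powerset.2 hA.2
    · rw [Finset.card_powerset, hIcard, hin]
  have hF : F = I.powerset ∪ {S} := by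
    have : F = F.filter (fun A => A ⊆ I) ∪ F.filter (fun A => ¬ A ⊆ I) := by
      rw [Finset.filter_union_filter_not_eq]
    rw [this, hpow, honly]
  refine ⟨hF, ?_⟩
  have hIF : I ∈ F := by
    rw [hF]; exact Finset.mem_union_left _ (Finset.mem_powerset.2 (subset_refl I))
  have hUn : I ∪ S ∈ F := hUC I hIF S hS.1
  have hUnS : I ∪ S = S := by
    have h1 : I ∪ S ∈ F.filter (fun A => ¬ A ⊆ I) := by
      simp only [Finset.mem_filter]
      refine ⟨hUn, fun h => hS.2 ?_⟩
      exact (Finset.subset_union_right).trans h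
    rw [honly] at h1
    exact Finset.mem_singleton.1 h1
  refine ⟨?_, fun h => hS.2 ?_⟩
  · rw [← hUnS]; exact Finset.subset_union_left
  · exact fun x hx => h hx
end

section
/- Let F be a union-closed family of subsets of [n] and S a finite set such that for each y ∈ S there is F_y ∈ F with F_y ∩ S = {y}. Then |F| ≥ 2^{|S|}, i.e., |S| ≤ log₂ |F|. -/
/-- If for each `y ∈ S` there is `F_y ∈ F` with `F_y ∩ S = {y}`, where `F` is a
union-closed family (containing `∅`), then `|F| ≥ 2^|S|`. -/
theorem stmt_10 (n : ℕ) (F : Finset (Finset ℕ)) (S : Finset ℕ)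
    (hsub : ∀ A ∈ F, A ⊆ Finset.Icc 1 n)
    (hUC : ∀ A ∈ F, ∀ B ∈ F, A ∪ B ∈ F)
    (hempty : ∅ ∈ F)
    (hfib : ∀ y ∈ S, ∃ Fy ∈ F, Fy ∩ S = {y}) :
    2 ^ S.card ≤ F.card := by
  choose g hgF hgS using hfib
  -- extend g to total function
  classical
  set f : Finset ℕ → Finset ℕ := fun Y => Y.attach.sup (fun y =>
    if h : (y : ℕ) ∈ S then g y h else ∅) with hf
  have hmem : ∀ Y : Finset ℕ, Y ⊆ S → f Y ∈ F := by
    intro Y hYS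
    induction Y using Finset.induction with
    | empty => simpa [hf] using hempty
    | @insert a Y ha ih =>
      have haS : a ∈ S := hYS (Finset.mem_insert_self a Y)
      have hYS' : Y ⊆ S := fun x hx => hYS (Finset.mem_insert_of_mem hx)
      have : f (insert a Y) = g a haS ∪ f Y := by
        simp only [hf, Finset.attach_insert, Finset.sup_insert, dif_pos haS]
        congr 1
        rw [Finset.sup_image]
        rfl
      rw [this]
      exact hUC _ (hgF a haS) _ (ih hYS')
  have hinter : ∀ Y : Finset ℕ, Y ⊆ S → f Y ∩ S = Y := by
    intro Y hYS
    induction Y using Finset.induction with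
    | empty => simp [hf]
    | @insert a Y ha ih =>
      have haS : a ∈ S := hYS (Finset.mem_insert_self a Y)
      have hYS' : Y ⊆ S := fun x hx => hYS (Finset.mem_insert_of_mem hx)
      have : f (insert a Y) = g a haS ∪ f Y := by
        simp only [hf, Finset.attach_insert, Finset.sup_insert, dif_pos haS]
        congr 1
        rw [Finset.sup_image]
        rfl
      rw [this, Finset.union_inter_distrib_right, hgS a haS, ih hYS',
        Finset.insert_eq]
  have hinj : Set.InjOn f S.powerset := by
    intro Y1 h1 Y2 h2 heq
    rw [Finset.mem_coe, Finset.mem_powerset] at h1 h2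
    rw [← hinter Y1 h1, ← hinter Y2 h2, heq]
  calc 2 ^ S.card = S.powerset.card := (Finset.card_powerset S).symm
    _ ≤ F.card := Finset.card_le_card_of_injOn f
        (fun Y hY => hmem Y (Finset.mem_powerset.mp hY)) hinj
end

section
/- Let k ≥ 6 and let F be a union-closed family of m subsets of [n] with 2^k + 2 ≤ m ≤ 2^{3(k-1)} and ∅ ∈ F. Then there are at least k elements of [n] each contained in more than m/(2^{k-1}+1) sets of F. Equivalently, f_k(F) > 1/(2^{k-1}+1). -/
/-!
Let `T` be the set of elements of frequency greater than `m / (2^(k-1) + 1)` and suppose `|T| < k`.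
At most `2^(k-1)` members of `F` lie inside `T`; the others are hit by a minimal set `S` of
elements outside `T`. Minimality gives every `x ∈ S` a member `A_x ∈ F` with `A_x ∩ S = {x}`,
and the unions of these sets show `2^|S| ≤ m`, so `|S| ≤ log₂ m ≤ 3(k-1)`. Averaging over `S`
yields an element outside `T` lying in at least `(m - 2^(k-1)) / (3(k-1))` members of `F`, which
exceeds `m / (2^(k-1) + 1)` because `m ≥ 2^k + 2` and `6(k-1) ≤ 2^(k-1) + 1`.
-/

open Finset

section

variable {α : Type*} [DecidableEq α]

def IsHittingSet (𝒢 : Finset (Finset α)) (S : Finset α) : Prop :=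
  ∀ A ∈ 𝒢, (A ∩ S).Nonempty

theorem IsHittingSet.exists_subset_forall_inter_eq_singleton {𝒢 : Finset (Finset α)}
    {V : Finset α} (hV : IsHittingSet 𝒢 V) :
    ∃ S ⊆ V, IsHittingSet 𝒢 S ∧ ∀ x ∈ S, ∃ A ∈ 𝒢, A ∩ S = {x} := by
  obtain ⟨S, hSV, hmin⟩ := exists_minimal_le_of_wellFoundedLT (IsHittingSet 𝒢) V hV
  refine ⟨S, hSV, hmin.prop, fun x hx => ?_⟩
  have hnot : ¬ IsHittingSet 𝒢 (S.erase x) := hmin.not_prop_of_lt (erase_ssubset hx)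
  simp only [IsHittingSet, not_forall, not_nonempty_iff_eq_empty, inter_erase,
    erase_eq_empty_iff] at hnot
  obtain ⟨A, hA, hAS⟩ := hnot
  exact ⟨A, hA, hAS.resolve_left (hmin.prop A hA).ne_empty⟩

theorem IsHittingSet.exists_card_le_card_mul_degree {𝒢 : Finset (Finset α)} {S : Finset α}
    (hS : IsHittingSet 𝒢 S) (h𝒢 : 𝒢.Nonempty) :
    ∃ x ∈ S, #𝒢 ≤ #S * #{A ∈ 𝒢 | x ∈ A} := by
  obtain ⟨A, hA⟩ := h𝒢
  have hSne : S.Nonempty := (hS A hA).mono inter_subset_right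
  obtain ⟨x, hx, hmax⟩ := S.exists_max_image (fun y => #{A ∈ 𝒢 | y ∈ A}) hSne
  refine ⟨x, hx, ?_⟩
  have hcover : 𝒢 ⊆ S.biUnion fun y => {A ∈ 𝒢 | y ∈ A} := by
    intro B hB
    obtain ⟨y, hy⟩ := hS B hB
    exact mem_biUnion.mpr ⟨y, (mem_inter.mp hy).2, mem_filter.mpr ⟨hB, (mem_inter.mp hy).1⟩⟩
  calc #𝒢 ≤ ∑ y ∈ S, #{A ∈ 𝒢 | y ∈ A} := (card_le_card hcover).trans card_biUnion_le
    _ ≤ #S * #{A ∈ 𝒢 | x ∈ A} := by simpa using sum_le_card_nsmul S _ _ hmax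

theorem card_le_two_pow_card_add_card_filter_not_subset (F : Finset (Finset α))
    (T : Finset α) : #F ≤ 2 ^ #T + #{A ∈ F | ¬A ⊆ T} := by
  have hinside : #{A ∈ F | A ⊆ T} ≤ 2 ^ #T :=
    card_powerset T ▸ card_le_card fun A hA => mem_powerset.mpr (mem_filter.mp hA).2
  rw [← card_filter_add_card_filter_not (fun A => A ⊆ T)]
  omega

namespace UnionClosed

theorem two_pow_card_le_card {F : Finset (Finset α)} (hF : SupClosed (F : Set (Finset α)))
    (hempty : ∅ ∈ F) {S : Finset α} (hS : ∀ x ∈ S, ∃ A ∈ F, A ∩ S = {x}) :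
    2 ^ #S ≤ #F := by
  choose! a haF haS using hS
  have hsup : ∀ X ⊆ S, X.sup a ∈ F ∧ X.sup a ∩ S = X := by
    intro X hX
    constructor
    · rcases X.eq_empty_or_nonempty with rfl | hne
      · exact hempty
      · exact hF.finsetSup_mem hne fun x hx => haF x (hX hx)
    · rw [← inf_eq_inter, sup_inf_distrib_right]
      exact (sup_congr rfl fun x hx => haS x (hX hx)).trans X.sup_singleton_eq_self
  rw [← card_powerset]
  refine card_le_card_of_injOn (fun X => X.sup a)
    (fun X hX => (hsup X (mem_powerset.mp hX)).1) fun X hX Y hY hXY => ?_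
  rw [← (hsup X (mem_powerset.mp hX)).2, ← (hsup Y (mem_powerset.mp hY)).2]
  exact congrArg (· ∩ S) hXY

theorem exists_mem_sdiff_card_le_two_pow_add_log_mul_card {F : Finset (Finset α)}
    (hF : SupClosed (F : Set (Finset α))) (hempty : ∅ ∈ F) {U : Finset α} (hU : ∀ A ∈ F, A ⊆ U)
    {T : Finset α} (hT : 2 ^ #T < #F) :
    ∃ x ∈ U \ T, #F ≤ 2 ^ #T + Nat.log 2 #F * #{A ∈ F | x ∈ A} := by
  have hcard := card_le_two_pow_card_add_card_filter_not_subset F T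
  set 𝒢 := {A ∈ F | ¬A ⊆ T}
  have h𝒢 : 𝒢.Nonempty := card_pos.mp (by omega)
  have hhit : IsHittingSet 𝒢 (U \ T) := fun A hA => by
    obtain ⟨hAF, hAT⟩ := mem_filter.mp hA
    obtain ⟨y, hyA, hyT⟩ := not_subset.mp hAT
    exact ⟨y, mem_inter.mpr ⟨hyA, mem_sdiff.mpr ⟨hU A hAF hyA, hyT⟩⟩⟩
  obtain ⟨S, hSU, hS, hpriv⟩ := hhit.exists_subset_forall_inter_eq_singleton
  have hSlog : #S ≤ Nat.log 2 #F := Nat.le_log_of_pow_le one_lt_two <|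
    two_pow_card_le_card hF hempty fun x hx => by
      obtain ⟨A, hA, hAS⟩ := hpriv x hx
      exact ⟨A, filter_subset _ F hA, hAS⟩
  obtain ⟨x, hx, hdeg⟩ := hS.exists_card_le_card_mul_degree h𝒢
  refine ⟨x, hSU hx, hcard.trans (Nat.add_le_add_left (hdeg.trans ?_) _)⟩
  exact Nat.mul_le_mul hSlog (card_le_card (filter_subset_filter _ (filter_subset _ F)))

end UnionClosed

end

theorem six_mul_le_two_pow_add_one {j : ℕ} (hj : 5 ≤ j) : 6 * j ≤ 2 ^ j + 1 := by
  induction j, hj using Nat.le_induction with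
  | base => norm_num
  | succ j hj ih =>
    have : 6 ≤ 2 ^ j := le_trans (by norm_num) (Nat.pow_le_pow_right two_pos (by omega : 3 ≤ j))
    rw [pow_succ]
    omega

/-- Let `k ≥ 6` and let `F` be a union-closed family of `m` subsets of `[n]` with
`2^k + 2 ≤ m ≤ 2^(3(k-1))` and `∅ ∈ F`. Then at least `k` elements of `[n]` are each
contained in more than `m/(2^(k-1)+1)` sets of `F`; i.e. `f_k(F) > 1/(2^(k-1)+1)`. -/
theorem stmt_12 (n k m : ℕ) (hk : 6 ≤ k) (F : Finset (Finset ℕ))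
    (hm : m = F.card)
    (hsub : ∀ A ∈ F, A ⊆ Finset.Icc 1 n)
    (hUC : ∀ A ∈ F, ∀ B ∈ F, A ∪ B ∈ F)
    (hempty : ∅ ∈ F)
    (hlo : 2 ^ k + 2 ≤ m) (hhi : m ≤ 2 ^ (3 * (k - 1))) :
    k ≤ ((Finset.Icc 1 n).filter (fun i =>
      (m : ℚ) / (2 ^ (k - 1) + 1) < ((F.filter (fun A => i ∈ A)).card : ℚ))).card := by
  by_contra! hfew
  set T := (Finset.Icc 1 n).filter (fun i =>
    (m : ℚ) / (2 ^ (k - 1) + 1) < ((F.filter (fun A => i ∈ A)).card : ℚ))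
  have h2k : 2 ^ k = 2 * 2 ^ (k - 1) := by rw [← pow_succ']; congr 1; omega
  have hT : 2 ^ #T ≤ 2 ^ (k - 1) := Nat.pow_le_pow_right two_pos (by omega)
  obtain ⟨x, hx, hdeg⟩ :=
    UnionClosed.exists_mem_sdiff_card_le_two_pow_add_log_mul_card hUC hempty hsub (T := T)
      (by omega)
  have hlog : Nat.log 2 #F ≤ 3 * (k - 1) :=
    (Nat.log_mono_right (hm ▸ hhi)).trans (Nat.log_pow one_lt_two _).le
  have h6 := six_mul_le_two_pow_add_one (j := k - 1) (by omega)
  set d := #{A ∈ F | x ∈ A}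
  -- `2m ≤ 2^k + 6(k-1)d ≤ 2^k + (2^(k-1) + 1)d` and `2^k + 2 ≤ m`
  have hlt : m < d * (2 ^ (k - 1) + 1) := by
    have := Nat.mul_le_mul_right d hlog
    have := Nat.mul_le_mul_right d h6
    nlinarith
  obtain ⟨hxIcc, hxT⟩ := mem_sdiff.mp hx
  refine hxT (mem_filter.mpr ⟨hxIcc, ?_⟩)
  rw [div_lt_iff₀ (by positivity)]
  exact_mod_cast hlt
end

section
/- In the direct sum family F of the previous construction, every element of ⋃_i S_i other than the distinguished elements s_i^* is contained in exactly 2^{n-1}(2^n+1)^{k-2} sets of F, so its relative frequency equals 1/2 − 1/(2·(2^n+1)) < 1/2, while each s_i^* has frequency 2^n/(2^n+1). -/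
open Finset

lemma card_subsets_containing (S T : Finset ℕ) (hT : T ⊆ S) :
    ((S.powerset).filter (fun A => T ⊆ A)).card = 2 ^ (S.card - T.card) := by
  rw [← Finset.card_sdiff_of_subset hT, ← Finset.card_powerset]
  apply Finset.card_bij' (fun A _ => A \ T) (fun B _ => B ∪ T)
  · intro A hA
    simp only [mem_filter, mem_powerset] at hA ⊢
    exact sdiff_subset_sdiff hA.1 le_rfl
  · intro B hB
    simp only [mem_filter, mem_powerset] at hB ⊢
    exact ⟨union_subset (hB.trans (sdiff_subset)) hT, subset_union_right⟩
  · intro A hA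
    simp only [mem_filter, mem_powerset] at hA
    exact sdiff_union_of_subset hA.2
  · intro B hB
    simp only [mem_powerset] at hB
    rw [union_sdiff_right, sdiff_eq_self_of_disjoint]
    exact (Finset.sdiff_disjoint).mono_left hB

section main
variable {n k : ℕ} {S : Fin (k-1) → Finset ℕ} {s : Fin (k-1) → ℕ}

lemma aux_count (hdisj : ∀ i j, i ≠ j → Disjoint (S i) (S j))
    (hcard : ∀ i, (S i).card = n + 1) (hs : ∀ i, s i ∈ S i)
    (j : Fin (k-1)) (x : ℕ) (hx : x ∈ S j) :
    (((Fintype.piFinset fun i =>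
        insert (∅ : Finset ℕ) ((S i).powerset.filter (fun A => s i ∈ A))).image
        (fun g => Finset.univ.sup g)).filter (fun A => x ∈ A)).card
      = ((insert (∅ : Finset ℕ) ((S j).powerset.filter (fun A => s j ∈ A))).filter
          (fun A => x ∈ A)).card * (2 ^ n + 1) ^ (k - 2) ∧
    ((Fintype.piFinset fun i =>
        insert (∅ : Finset ℕ) ((S i).powerset.filter (fun A => s i ∈ A))).image
        (fun g => Finset.univ.sup g)).card = (2 ^ n + 1) ^ (k - 1) := by
  set Fi : Fin (k-1) → Finset (Finset ℕ) :=
    fun i => insert (∅ : Finset ℕ) ((S i).powerset.filter (fun A => s i ∈ A)) with hFi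
  have hsub : ∀ g ∈ Fintype.piFinset Fi, ∀ i, g i ⊆ S i := by
    intro g hg i
    have := Fintype.mem_piFinset.mp hg i
    simp only [hFi, mem_insert, mem_filter, mem_powerset] at this
    rcases this with h | h
    · simp [h]
    · exact h.1
  have hsup : ∀ g ∈ Fintype.piFinset Fi, ∀ (j' : Fin (k-1)) (y : ℕ), y ∈ S j' →
      (y ∈ Finset.univ.sup g ↔ y ∈ g j') := by
    intro g hg j' y hy
    constructor
    · intro h
      obtain ⟨i, -, hi⟩ := Finset.mem_sup.mp h
      rcases eq_or_ne i j' with rfl | hne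
      · exact hi
      · exact absurd hy (Finset.disjoint_left.mp (hdisj i j' hne) (hsub g hg i hi) |>.elim)
    · intro h
      exact Finset.mem_sup.mpr ⟨j', mem_univ _, h⟩
  have hinj : Set.InjOn (fun g => Finset.univ.sup g)
      (Fintype.piFinset Fi : Set (Fin (k-1) → Finset ℕ)) := by
    intro g hg g' hg' h
    simp only [Finset.mem_coe] at hg hg'
    funext i
    ext y
    rcases em (y ∈ S i) with hy | hy
    · rw [← hsup g hg i y hy, ← hsup g' hg' i y hy,
        show Finset.univ.sup g = Finset.univ.sup g' from h]
    · constructor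
      · intro h'; exact absurd (hsub g hg i h') hy
      · intro h'; exact absurd (hsub g' hg' i h') hy
  have hcardFi : ∀ i, (Fi i).card = 2 ^ n + 1 := by
    intro i
    have hempty : (∅ : Finset ℕ) ∉ (S i).powerset.filter (fun A => s i ∈ A) := by
      simp
    rw [hFi]
    rw [Finset.card_insert_of_notMem hempty]
    have : ((S i).powerset.filter (fun A => s i ∈ A))
        = ((S i).powerset.filter (fun A => {s i} ⊆ A)) := by
      apply Finset.filter_congr
      intro A _
      simp
    rw [this, card_subsets_containing _ _ (by simp [hs i]), hcard i]
    simp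
  have hcardF : ((Fintype.piFinset Fi).image (fun g => Finset.univ.sup g)).card
      = (2 ^ n + 1) ^ (k - 1) := by
    rw [Finset.card_image_of_injOn hinj, Fintype.card_piFinset]
    simp only [hcardFi]
    rw [Finset.prod_const]
    simp
  refine ⟨?_, hcardF⟩
  rw [Finset.filter_image]
  rw [Finset.card_image_of_injOn (hinj.mono (Finset.coe_subset.mpr (Finset.filter_subset _ _)))]
  have hfc : (Fintype.piFinset Fi).filter (fun g => x ∈ Finset.univ.sup g)
      = (Fintype.piFinset Fi).filter (fun g => x ∈ g j) := by
    apply Finset.filter_congr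
    intro g hg
    simpa using hsup g hg j x hx
  rw [hfc]
  have hupd : (Fintype.piFinset Fi).filter (fun g => x ∈ g j)
      = Fintype.piFinset (Function.update Fi j ((Fi j).filter (fun A => x ∈ A))) := by
    ext g
    simp only [Finset.mem_filter, Fintype.mem_piFinset]
    constructor
    · rintro ⟨h1, h2⟩ i
      rcases eq_or_ne i j with rfl | hne
      · rw [Function.update_self]; exact Finset.mem_filter.mpr ⟨h1 i, h2⟩
      · rw [Function.update_of_ne hne]; exact h1 i
    · intro h
      constructor
      · intro i
        rcases eq_or_ne i j with rfl | hne
        · have := h i; rw [Function.update_self] at this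
          exact (Finset.mem_filter.mp this).1
        · have := h i; rwa [Function.update_of_ne hne] at this
      · have := h j; rw [Function.update_self] at this
        exact (Finset.mem_filter.mp this).2
  rw [hupd, Fintype.card_piFinset]
  have happ : ∀ i, (Function.update Fi j ((Fi j).filter (fun A => x ∈ A)) i).card
      = Function.update (fun i => (Fi i).card) j ((Fi j).filter (fun A => x ∈ A)).card i :=
    fun i => Function.apply_update (fun _ A => A.card) Fi j _ i
  simp only [happ]
  rw [Finset.prod_update_of_mem (Finset.mem_univ j)]
  have : ∏ i ∈ Finset.univ \ {j}, (Fi i).card = (2 ^ n + 1) ^ (k - 2) := by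
    rw [Finset.prod_congr rfl (fun i _ => hcardFi i), Finset.prod_const]
    congr 1
    rw [Finset.card_sdiff_of_subset (by simp), Finset.card_singleton, Finset.card_univ, Fintype.card_fin]
    omega
  rw [this]
end main

/-- In the direct sum family `F` built from pairwise disjoint `Sᵢ` of size `n+1` with
distinguished `sᵢ* ∈ Sᵢ` and `𝓕ᵢ = {∅} ∪ {A ⊆ Sᵢ : sᵢ* ∈ A}`: every non-distinguished
element `x ∈ Sⱼ` is contained in exactly `2^(n-1)·(2^n+1)^(k-2)` sets of `F`, so its
relative frequency equals `1/2 − 1/(2(2^n+1)) < 1/2`, while each `sᵢ*` has frequency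
`2^n/(2^n+1)`. -/
theorem stmt_19 (n k : ℕ) (hn : 1 ≤ n) (hk : 2 ≤ k)
    (S : Fin (k - 1) → Finset ℕ)
    (hdisj : ∀ i j, i ≠ j → Disjoint (S i) (S j))
    (hcard : ∀ i, (S i).card = n + 1)
    (s : Fin (k - 1) → ℕ) (hs : ∀ i, s i ∈ S i)
    (F : Finset (Finset ℕ))
    (hF : F = (Fintype.piFinset fun i =>
        insert (∅ : Finset ℕ) ((S i).powerset.filter (fun A => s i ∈ A))).image
        (fun g => Finset.univ.sup g)) :
    (∀ j, ∀ x ∈ S j, x ≠ s j →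
      (F.filter (fun A => x ∈ A)).card = 2 ^ (n - 1) * (2 ^ n + 1) ^ (k - 2) ∧
      ((F.filter (fun A => x ∈ A)).card : ℚ) / F.card =
        1 / 2 - 1 / (2 * (2 ^ n + 1)) ∧
      ((F.filter (fun A => x ∈ A)).card : ℚ) / F.card < 1 / 2) ∧
    (∀ i, ((F.filter (fun A => s i ∈ A)).card : ℚ) / F.card =
      2 ^ n / (2 ^ n + 1)) := by
  subst hF
  have hq : (0:ℚ) < 2 ^ n + 1 := by positivity
  have hk1 : k - 1 = (k - 2) + 1 := by omega
  have hqpow : ((2:ℚ) ^ n + 1) ^ (k - 2) ≠ 0 := pow_ne_zero _ (ne_of_gt hq)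
  have hratio : ∀ a : ℚ, (a * ((2:ℚ) ^ n + 1) ^ (k - 2)) / ((2:ℚ) ^ n + 1) ^ (k - 1)
      = a / ((2:ℚ) ^ n + 1) := by
    intro a
    rw [hk1, pow_succ, mul_comm (((2:ℚ) ^ n + 1) ^ (k - 2)) ((2:ℚ) ^ n + 1)]
    exact mul_div_mul_right _ _ hqpow
  have h2n : (2:ℚ) ^ n = 2 * 2 ^ (n - 1) := by
    rw [← pow_succ', Nat.sub_add_cancel hn]
  constructor
  · intro j x hx hxs
    obtain ⟨h1, h2⟩ := aux_count hdisj hcard hs j x hx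
    have hcnt : ((insert (∅ : Finset ℕ) ((S j).powerset.filter (fun A => s j ∈ A))).filter
        (fun A => x ∈ A)).card = 2 ^ (n - 1) := by
      rw [Finset.filter_insert, if_neg (by simp), Finset.filter_filter]
      have heq : ((S j).powerset.filter fun A => s j ∈ A ∧ x ∈ A)
          = ((S j).powerset.filter fun A => ({s j, x} : Finset ℕ) ⊆ A) := by
        apply Finset.filter_congr
        intro A _
        simp [Finset.insert_subset_iff]
      rw [heq, card_subsets_containing _ _ (by
        rw [Finset.insert_subset_iff]
        exact ⟨hs j, by simpa using hx⟩)]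
      rw [hcard j, Finset.card_insert_of_notMem (by simp [Ne.symm hxs]),
        Finset.card_singleton]
      congr 1
    rw [h1, hcnt, h2]
    refine ⟨rfl, ?_, ?_⟩
    · push_cast
      rw [hratio]
      rw [h2n]
      have : (0:ℚ) < 2 * 2 ^ (n-1) + 1 := by positivity
      field_simp
      ring
    · push_cast
      rw [hratio]
      have hlt : (0:ℚ) < 1 / (2 * (2 ^ n + 1)) := by positivity
      have heq2 : (2:ℚ) ^ (n-1) / (2 ^ n + 1) = 1 / 2 - 1 / (2 * (2 ^ n + 1)) := by
        rw [h2n]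
        have : (0:ℚ) < 2 * 2 ^ (n-1) + 1 := by positivity
        field_simp
        ring
      rw [heq2]
      linarith
  · intro i
    obtain ⟨h1, h2⟩ := aux_count hdisj hcard hs i (s i) (hs i)
    have hcnt : ((insert (∅ : Finset ℕ) ((S i).powerset.filter (fun A => s i ∈ A))).filter
        (fun A => s i ∈ A)).card = 2 ^ n := by
      rw [Finset.filter_insert, if_neg (by simp), Finset.filter_filter]
      have heq : ((S i).powerset.filter fun A => s i ∈ A ∧ s i ∈ A)
          = ((S i).powerset.filter fun A => ({s i} : Finset ℕ) ⊆ A) := by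
        apply Finset.filter_congr
        intro A _
        simp
      rw [heq, card_subsets_containing _ _ (by simpa using hs i), hcard i,
        Finset.card_singleton]
      simp
    rw [h1, hcnt, h2]
    push_cast
    rw [hratio]
end
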